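/- For every nonnegative integer n, three times the number of integer solutions (x,y,z) to x² + y² + 2z² = 2n+1 equals the number of integer solutions to x² + y² + z² = 4n+2. -/

import Mathlib

/-! Squares are `0` or `1` mod `4`, so for odd `m` every representation `x² + y² + z² = 2m` has
exactly one even entry. Those with `z` even correspond to the representations
`m = a² + b² + 2c²` via `(a, b, c) ↦ (a + b, a - b, 2c)`, and a cyclic rotation of the coordinates
moves the even entry of any other representation to the last place. -/

theorem Int.sq_emod_four_eq_emod_two (x : ℤ) : x ^ 2 % 4 = x % 2 := by
  rcases Int.even_or_odd' x with ⟨k, rfl | rfl⟩ <;> ring_nf <;> omega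

theorem Nat.card_sum_sum_self (α : Type*) : Nat.card (α ⊕ α ⊕ α) = 3 * Nat.card α := by
  rcases finite_or_infinite α with h | h
  · simp only [Nat.card_sum]; ring
  · simp [Nat.card_eq_zero_of_infinite]

@[simps]
def Equiv.rotateTriple (α : Type*) : α × α × α ≃ α × α × α where
  toFun p := (p.2.2, p.1, p.2.1)
  invFun p := (p.2.1, p.2.2, p.1)

section SumThreeSq

variable {x y z m : ℤ}

theorem even_add_of_sq_add_sq_add_sq_eq_two_mul (h : x ^ 2 + y ^ 2 + z ^ 2 = 2 * m)
    (hz : Even z) : Even (x + y) := by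
  have hx := x.sq_emod_four_eq_emod_two
  have hy := y.sq_emod_four_eq_emod_two
  have hz' := z.sq_emod_four_eq_emod_two
  rw [Int.even_iff] at hz ⊢
  omega

theorem even_iff_odd_and_odd_of_sq_add_sq_add_sq_eq_two_mul
    (h : x ^ 2 + y ^ 2 + z ^ 2 = 2 * m) (hm : Odd m) : Even z ↔ Odd x ∧ Odd y := by
  have hx := x.sq_emod_four_eq_emod_two
  have hy := y.sq_emod_four_eq_emod_two
  have hz := z.sq_emod_four_eq_emod_two
  rw [Int.odd_iff] at hm
  simp only [Int.even_iff, Int.odd_iff]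
  omega

theorem halves_sq_add_sq_add_two_mul_sq_eq (h : x ^ 2 + y ^ 2 + z ^ 2 = 2 * m)
    (hz : Even z) : ((x + y) / 2) ^ 2 + ((x - y) / 2) ^ 2 + 2 * (z / 2) ^ 2 = m := by
  obtain ⟨v, hv⟩ := (even_add_of_sq_add_sq_add_sq_eq_two_mul h hz).two_dvd
  obtain ⟨w, rfl⟩ := hz.two_dvd
  obtain rfl : y = 2 * v - x := by omega
  rw [hv, show x - (2 * v - x) = 2 * (x - v) by ring]
  simp only [Int.mul_ediv_cancel_left _ two_ne_zero]
  linarith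

end SumThreeSq

def sqAddSqAddTwoMulSqEquiv (m : ℤ) :
    {p : ℤ × ℤ × ℤ // p.1 ^ 2 + p.2.1 ^ 2 + 2 * p.2.2 ^ 2 = m} ≃
      {p : ℤ × ℤ × ℤ // p.1 ^ 2 + p.2.1 ^ 2 + p.2.2 ^ 2 = 2 * m ∧ Even p.2.2} where
  toFun p := ⟨(p.1.1 + p.1.2.1, p.1.1 - p.1.2.1, 2 * p.1.2.2),
    by linear_combination 2 * p.2, even_two_mul _⟩
  invFun p := ⟨((p.1.1 + p.1.2.1) / 2, (p.1.1 - p.1.2.1) / 2, p.1.2.2 / 2),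
    halves_sq_add_sq_add_two_mul_sq_eq p.2.1 p.2.2⟩
  left_inv p := by ext <;> dsimp only <;> omega
  right_inv := fun ⟨_, h, hz⟩ => by
    have hxy := even_add_of_sq_add_sq_add_sq_eq_two_mul h hz
    rw [Int.even_iff] at hxy hz
    ext <;> dsimp only <;> omega

def sumThreeSqEquivSumSum {m : ℤ} (hm : Odd m) :
    {p : ℤ × ℤ × ℤ // p.1 ^ 2 + p.2.1 ^ 2 + p.2.2 ^ 2 = 2 * m} ≃
      {p : ℤ × ℤ × ℤ // p.1 ^ 2 + p.2.1 ^ 2 + p.2.2 ^ 2 = 2 * m ∧ Even p.2.2} ⊕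
      {p : ℤ × ℤ × ℤ // p.1 ^ 2 + p.2.1 ^ 2 + p.2.2 ^ 2 = 2 * m ∧ Even p.2.2} ⊕
      {p : ℤ × ℤ × ℤ // p.1 ^ 2 + p.2.1 ^ 2 + p.2.2 ^ 2 = 2 * m ∧ Even p.2.2} :=
  let R (p : ℤ × ℤ × ℤ) : Prop := p.1 ^ 2 + p.2.1 ^ 2 + p.2.2 ^ 2 = 2 * m
  have parity {x y z : ℤ} (h : R (x, y, z)) :
      (Even x ↔ ¬Even y ∧ ¬Even z) ∧ (Even y ↔ ¬Even z ∧ ¬Even x) ∧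
        (Even z ↔ ¬Even x ∧ ¬Even y) := by
    simp only [Int.not_even_iff_odd]
    exact ⟨even_iff_odd_and_odd_of_sq_add_sq_add_sq_eq_two_mul (by linarith) hm,
      even_iff_odd_and_odd_of_sq_add_sq_add_sq_eq_two_mul (by linarith) hm,
      even_iff_odd_and_odd_of_sq_add_sq_add_sq_eq_two_mul h hm⟩
  (Equiv.subtypeEquivRight fun ⟨x, y, z⟩ =>
    ⟨fun h => by have := parity h; tauto, by tauto⟩).trans <|
  (subtypeOrEquiv (fun p => R p ∧ Even p.2.2) _ <| Pi.disjoint_iff.2 fun ⟨x, y, z⟩ =>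
    Prop.disjoint_iff.2 fun ⟨⟨h, _⟩, _⟩ => by have := parity h; tauto).trans <|
  Equiv.sumCongr (Equiv.refl _) <|
    (subtypeOrEquiv (fun p => R p ∧ Even p.1) (fun p => R p ∧ Even p.2.1) <|
      Pi.disjoint_iff.2 fun ⟨x, y, z⟩ =>
        Prop.disjoint_iff.2 fun ⟨⟨h, _⟩, _⟩ => by have := parity h; tauto).trans <|
    Equiv.sumCongr
      ((Equiv.rotateTriple ℤ).symm.subtypeEquiv fun _ => and_congr_left fun _ => by
        simp only [R, Equiv.rotateTriple_symm_apply]; ring_nf)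
      ((Equiv.rotateTriple ℤ).subtypeEquiv fun _ => and_congr_left fun _ => by
        simp only [R, Equiv.rotateTriple_apply]; ring_nf)

theorem stmt8 (n : ℕ) :
    3 * Nat.card {p : ℤ × ℤ × ℤ // p.1^2 + p.2.1^2 + 2*p.2.2^2 = (2*n+1 : ℤ)} = Nat.card {p : ℤ × ℤ × ℤ // p.1^2 + p.2.1^2 + p.2.2^2 = (4*n+2 : ℤ)} := by
  rw [show (4 * n + 2 : ℤ) = 2 * (2 * n + 1) by ring,
    Nat.card_congr (sumThreeSqEquivSumSum (odd_two_mul_add_one (n : ℤ))),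
    Nat.card_sum_sum_self, Nat.card_congr (sqAddSqAddTwoMulSqEquiv _)]
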